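/- arXiv:1809.04243 — 3 statements merged into one kernel-verified Lean document; each statement's English description precedes it below -/
import Mathlib

section
/- For every real number p, there is no vector f ∈ ℝ¹² satisfying ⟨f, a₁⟩ = ⟨f, a₂⟩ = ⟨f, b₁⟩ = ⟨f, b₂⟩ = 0 and ⟨f, v⟩ > 0 (with respect to the standard inner product on ℝ¹²), where a₁, a₂, b₁, b₂, v are the vectors defined from p as in the context. Consequently no driving force makes the standard folding of the 3×3 Miura-ori uniquely self-foldable. -/
open scoped InnerProductSpace

-- Folding-angle coordinates of the 12 creases of a 3×3 Miura-ori.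

/-- Basis tangent vector `a₁`. -/
def miuraA1 : EuclideanSpace ℝ (Fin 12) := WithLp.toLp 2 (![0,0,1,1,1,0,0,0,0,0,0,0] : Fin 12 → ℝ)

/-- Basis tangent vector `a₂`. -/
def miuraA2 : EuclideanSpace ℝ (Fin 12) := WithLp.toLp 2 (![0,0,0,0,0,0,0,1,1,1,0,0] : Fin 12 → ℝ)

/-- Basis tangent vector `b₁` (p is the folding multiplier). -/
def miuraB1 (p : ℝ) : EuclideanSpace ℝ (Fin 12) := WithLp.toLp 2 (![1,0,-p,p,p,1,0,p,-p,-p,1,0] : Fin 12 → ℝ)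

/-- Basis tangent vector `b₂` (p is the folding multiplier). -/
def miuraB2 (p : ℝ) : EuclideanSpace ℝ (Fin 12) := WithLp.toLp 2 (![0,1,-p,-p,p,0,1,p,p,-p,0,1] : Fin 12 → ℝ)

/-- Tangent vector of the standard folding mode of the 3×3 Miura-ori. -/
def miuraV (p : ℝ) : EuclideanSpace ℝ (Fin 12) := WithLp.toLp 2 (![1,-1,-p,p,-p,1,-1,p,-p,p,1,-1] : Fin 12 → ℝ)

theorem inner_eq_zero_of_mem_span_of_forall_inner_eq_zero {𝕜 E : Type*} [RCLike 𝕜]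
    [NormedAddCommGroup E] [InnerProductSpace 𝕜 E] {s : Set E} {f v : E}
    (hf : ∀ u ∈ s, ⟪f, u⟫_𝕜 = 0) (hv : v ∈ Submodule.span 𝕜 s) : ⟪f, v⟫_𝕜 = 0 :=
  (Submodule.isOrtho_span.mpr fun _ hu w hw => (Set.mem_singleton_iff.mp hu) ▸ hf w hw).inner_eq
    (Submodule.mem_span_singleton_self f) hv

theorem miuraV_eq (p : ℝ) :
    miuraV p = miuraB1 p - miuraB2 p - p • miuraA1 + p • miuraA2 := by
  ext i
  fin_cases i <;> simp [miuraA1, miuraA2, miuraB1, miuraB2, miuraV]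

theorem miuraV_mem_span (p : ℝ) :
    miuraV p ∈ Submodule.span ℝ {miuraA1, miuraA2, miuraB1 p, miuraB2 p} := by
  rw [miuraV_eq]
  refine add_mem (sub_mem (sub_mem ?_ ?_) (Submodule.smul_mem _ _ ?_)) (Submodule.smul_mem _ _ ?_) <;>
    exact Submodule.subset_span (by simp)

/-- No driving force makes the standard folding of the 3×3 Miura-ori uniquely
self-foldable: there is no vector `f` orthogonal to `a₁, a₂, b₁, b₂` with
positive inner product with `v`. -/
theorem miura_no_driving_force (p : ℝ) :
    ¬ ∃ f : EuclideanSpace ℝ (Fin 12),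
      ⟪f, miuraA1⟫_ℝ = 0 ∧ ⟪f, miuraA2⟫_ℝ = 0 ∧ ⟪f, miuraB1 p⟫_ℝ = 0 ∧
        ⟪f, miuraB2 p⟫_ℝ = 0 ∧ 0 < ⟪f, miuraV p⟫_ℝ := by
  rintro ⟨f, h1, h2, h3, h4, hpos⟩
  have hf : ∀ u ∈ ({miuraA1, miuraA2, miuraB1 p, miuraB2 p} : Set _), ⟪f, u⟫_ℝ = 0 := by
    rintro u (rfl | rfl | rfl | rfl) <;> assumption
  exact hpos.ne' (inner_eq_zero_of_mem_span_of_forall_inner_eq_zero hf (miuraV_mem_span p))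
end

section
/- Let p and q be real numbers with 0 < p < 1 and 0 < |q| < 1. Suppose x₁ ∈ {−p, −1/q}, x₂ ∈ {1/p, −q}, x₃ ∈ {p, 1/q}, and x₄ ∈ {−1/p, q}. Then x₁·x₂·x₃·x₄ = 1 if and only if either (x₁, x₂, x₃, x₄) = (−p, 1/p, p, −1/p) or (x₁, x₂, x₃, x₄) = (−1/q, −q, 1/q, q). In particular, exactly two of the sixteen possible choices satisfy the equation. -/
/-- Equation (2) of the paper: with folding multipliers `0 < p < 1` and `0 < |q| < 1`,
among the sixteen choices of folding-multiplier ratios around a quadrilateral tile,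
exactly the two "all-mode-1" and "all-mode-2" choices have product 1. -/
theorem folding_multiplier_ratio_product_eq_one_iff
    (p q : ℝ) (hp0 : 0 < p) (hp1 : p < 1) (hq0 : 0 < |q|) (hq1 : |q| < 1)
    (x₁ x₂ x₃ x₄ : ℝ)
    (h₁ : x₁ ∈ ({-p, -1/q} : Set ℝ)) (h₂ : x₂ ∈ ({1/p, -q} : Set ℝ))
    (h₃ : x₃ ∈ ({p, 1/q} : Set ℝ)) (h₄ : x₄ ∈ ({-1/p, q} : Set ℝ)) :
    x₁ * x₂ * x₃ * x₄ = 1 ↔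
      (x₁, x₂, x₃, x₄) = (-p, 1/p, p, -1/p) ∨
        (x₁, x₂, x₃, x₄) = (-1/q, -q, 1/q, q) := by
  have hp : p ≠ 0 := ne_of_gt hp0
  have hq : q ≠ 0 := by intro h; rw [h] at hq0; simp at hq0
  have hq2 : 0 < q * q := mul_self_pos.mpr hq
  have hqu : q < 1 := lt_of_le_of_lt (le_abs_self q) hq1
  have hql : -1 < q := by have := (abs_lt.mp hq1).1; linarith
  have h4 : 0 < 1 - p * q := by nlinarith
  have h5 : 0 < 1 + p * q := by nlinarith
  have h1 : 0 < (1 - p * q) * (1 + p * q) := mul_pos h4 h5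
  simp only [Set.mem_insert_iff, Set.mem_singleton_iff] at h₁ h₂ h₃ h₄
  constructor
  · intro h
    rcases h₁ with rfl | rfl <;> rcases h₂ with rfl | rfl <;>
      rcases h₃ with rfl | rfl <;> rcases h₄ with rfl | rfl <;>
      first
        | (left; rfl)
        | (right; rfl)
        | (exfalso; field_simp at h; nlinarith [h, h4, h5, h1, hp0, hq2])
  · rintro (h | h) <;> simp only [Prod.mk.injEq] at h <;>
      obtain ⟨rfl, rfl, rfl, rfl⟩ := h <;> field_simp
end

section
/- Let α and β be real numbers with 0 < α, 0 < β, α + β < π, and α ≠ β. Set p = cos((α+β)/2)/cos((α−β)/2) and q = −sin((α−β)/2)/sin((α+β)/2). Suppose x₁ ∈ {−p, −1/q}, x₂ ∈ {1/p, −q}, x₃ ∈ {p, 1/q}, and x₄ ∈ {−1/p, q}. Then x₁·x₂·x₃·x₄ = 1 if and only if either (x₁, x₂, x₃, x₄) = (−p, 1/p, p, −1/p) or (x₁, x₂, x₃, x₄) = (−1/q, −q, 1/q, q). -/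
open Real

/-! The options at the third and fourth vertex are the negatives of those at the first and
second. With `r = p * q`, both `x₁ * x₂` and `(-x₃) * (-x₄)` range over `{-1, 1, r, -r⁻¹}`, taking
the values `-1` and `1` exactly for the all-mode-1 and the all-mode-2 choice of the two vertices.
If `r ≠ 0, ±1`, a product of two of these values is `1` only for `(-1) * (-1)` and `1 * 1`.
For the tessellation, `1 - r` and `1 + r` are `sin α` and `sin β` divided by
`sin ((α + β) / 2) * cos ((α - β) / 2)`, so `|r| < 1`. -/

section TileProduct

variable {K : Type*} [Field K] {p q x y : K}

lemma mul_mem_of_mem_pair (hp : p ≠ 0) (hq : q ≠ 0)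
    (hx : x ∈ ({-p, -1/q} : Set K)) (hy : y ∈ ({1/p, -q} : Set K)) :
    x * y ∈ ({-1, 1, p * q, -(p * q)⁻¹} : Set K) := by
  rcases hx with rfl | rfl <;> rcases hy with rfl | rfl <;> field_simp <;> simp

variable [CharZero K]

lemma mul_eq_neg_one_iff_of_mem_pair (hp : p ≠ 0) (hq : q ≠ 0) (hpq : p * q ≠ 1)
    (hpq' : p * q ≠ -1) (hx : x ∈ ({-p, -1/q} : Set K)) (hy : y ∈ ({1/p, -q} : Set K)) :
    x * y = -1 ↔ x = -p ∧ y = 1/p := by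
  refine ⟨fun h => ?_, fun ⟨hx, hy⟩ => by simp [hx, hy, hp]⟩
  rcases hx with rfl | rfl <;> rcases hy with rfl | rfl
  · exact ⟨rfl, rfl⟩
  · exact absurd (by linear_combination h) hpq'
  · field_simp at h; exact absurd (by linear_combination h) hpq
  · field_simp at h; norm_num at h

lemma mul_eq_one_iff_of_mem_pair (hp : p ≠ 0) (hq : q ≠ 0) (hpq : p * q ≠ 1)
    (hpq' : p * q ≠ -1) (hx : x ∈ ({-p, -1/q} : Set K)) (hy : y ∈ ({1/p, -q} : Set K)) :
    x * y = 1 ↔ x = -1/q ∧ y = -q := by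
  refine ⟨fun h => ?_, fun ⟨hx, hy⟩ => by simp [hx, hy, hq]⟩
  rcases hx with rfl | rfl <;> rcases hy with rfl | rfl
  · field_simp at h; norm_num at h
  · exact absurd (by linear_combination h) hpq
  · field_simp at h; exact absurd (by linear_combination -h) hpq'
  · exact ⟨rfl, rfl⟩

lemma eq_neg_one_and_eq_neg_one_or_of_mul_eq_one {r a b : K} (hr : r ≠ 0) (hr₁ : r ≠ 1)
    (hr₂ : r ≠ -1) (ha : a ∈ ({-1, 1, r, -r⁻¹} : Set K)) (hb : b ∈ ({-1, 1, r, -r⁻¹} : Set K))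
    (hab : a * b = 1) :
    a = -1 ∧ b = -1 ∨ a = 1 ∧ b = 1 := by
  rcases ha with rfl | rfl | rfl | rfl <;> rcases hb with rfl | rfl | rfl | rfl <;>
    field_simp at hab <;> grind

theorem tile_product_eq_one_iff (hp : p ≠ 0) (hq : q ≠ 0) (hpq : p * q ≠ 1)
    (hpq' : p * q ≠ -1) {x₁ x₂ x₃ x₄ : K}
    (h₁ : x₁ ∈ ({-p, -1/q} : Set K)) (h₂ : x₂ ∈ ({1/p, -q} : Set K))
    (h₃ : x₃ ∈ ({p, 1/q} : Set K)) (h₄ : x₄ ∈ ({-1/p, q} : Set K)) :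
    x₁ * x₂ * x₃ * x₄ = 1 ↔
      (x₁, x₂, x₃, x₄) = (-p, 1/p, p, -1/p) ∨ (x₁, x₂, x₃, x₄) = (-1/q, -q, 1/q, q) := by
  have h₃' : -x₃ ∈ ({-p, -1/q} : Set K) := by simpa [neg_div] using Set.neg_mem_neg.2 h₃
  have h₄' : -x₄ ∈ ({1/p, -q} : Set K) := by simpa [neg_div] using Set.neg_mem_neg.2 h₄
  rw [show x₁ * x₂ * x₃ * x₄ = x₁ * x₂ * (-x₃ * -x₄) by ring]
  constructor
  · intro h
    rcases eq_neg_one_and_eq_neg_one_or_of_mul_eq_one (mul_ne_zero hp hq) hpq hpq'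
      (mul_mem_of_mem_pair hp hq h₁ h₂) (mul_mem_of_mem_pair hp hq h₃' h₄') h with
      ⟨h₁₂, h₃₄⟩ | ⟨h₁₂, h₃₄⟩
    · obtain ⟨rfl, rfl⟩ := (mul_eq_neg_one_iff_of_mem_pair hp hq hpq hpq' h₁ h₂).1 h₁₂
      obtain ⟨h₃, h₄⟩ := (mul_eq_neg_one_iff_of_mem_pair hp hq hpq hpq' h₃' h₄').1 h₃₄
      exact .inl (by simp [neg_eq_iff_eq_neg.1 h₃, neg_eq_iff_eq_neg.1 h₄, neg_div])
    · obtain ⟨rfl, rfl⟩ := (mul_eq_one_iff_of_mem_pair hp hq hpq hpq' h₁ h₂).1 h₁₂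
      obtain ⟨h₃, h₄⟩ := (mul_eq_one_iff_of_mem_pair hp hq hpq hpq' h₃' h₄').1 h₃₄
      exact .inr (by simp [neg_eq_iff_eq_neg.1 h₃, neg_eq_iff_eq_neg.1 h₄, neg_div])
  · rintro (h | h) <;> obtain ⟨rfl, rfl, rfl, rfl⟩ := Prod.mk.injEq .. ▸ h <;> field_simp

end TileProduct

section Tessellation

variable {α β : ℝ}

lemma one_sub_mul_folding_multipliers (hS : sin ((α + β) / 2) ≠ 0)
    (hD : cos ((α - β) / 2) ≠ 0) :
    1 - cos ((α + β) / 2) / cos ((α - β) / 2) * (-sin ((α - β) / 2) / sin ((α + β) / 2)) =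
      sin α / (sin ((α + β) / 2) * cos ((α - β) / 2)) := by
  have hα : sin α = sin ((α + β) / 2 + (α - β) / 2) := by ring_nf
  rw [hα, sin_add]
  field_simp
  ring

lemma one_add_mul_folding_multipliers (hS : sin ((α + β) / 2) ≠ 0)
    (hD : cos ((α - β) / 2) ≠ 0) :
    1 + cos ((α + β) / 2) / cos ((α - β) / 2) * (-sin ((α - β) / 2) / sin ((α + β) / 2)) =
      sin β / (sin ((α + β) / 2) * cos ((α - β) / 2)) := by
  have hβ : sin β = sin ((α + β) / 2 - (α - β) / 2) := by ring_nf
  rw [hβ, sin_sub]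
  field_simp
  ring

theorem abs_folding_multipliers_mul_lt_one (hα : 0 < α) (hβ : 0 < β) (hαβ : α + β < π) :
    |cos ((α + β) / 2) / cos ((α - β) / 2) * (-sin ((α - β) / 2) / sin ((α + β) / 2))| < 1 := by
  have hS : 0 < sin ((α + β) / 2) := sin_pos_of_pos_of_lt_pi (by linarith) (by linarith)
  have hD : 0 < cos ((α - β) / 2) := cos_pos_of_mem_Ioo ⟨by linarith, by linarith⟩
  have hsα : 0 < sin α := sin_pos_of_pos_of_lt_pi hα (by linarith)
  have hsβ : 0 < sin β := sin_pos_of_pos_of_lt_pi hβ (by linarith)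
  have h_sub : 0 < sin α / (sin ((α + β) / 2) * cos ((α - β) / 2)) := by positivity
  have h_add : 0 < sin β / (sin ((α + β) / 2) * cos ((α - β) / 2)) := by positivity
  rw [← one_sub_mul_folding_multipliers hS.ne' hD.ne'] at h_sub
  rw [← one_add_mul_folding_multipliers hS.ne' hD.ne'] at h_add
  exact abs_lt.2 ⟨by linarith, by linarith⟩

end Tessellation

/-- Key step in the second proof of Theorem 4(c): for the flat-foldable
rotationally-symmetric quadrilateral tessellation with folding multipliers
`p = cos((α+β)/2)/cos((α−β)/2)` and `q = −sin((α−β)/2)/sin((α+β)/2)`, the product of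
the four folding-multiplier ratios around a tile equals 1 exactly for the two
"all-mode-1" and "all-mode-2" choices; hence the tessellation has exactly two
rigidly-foldable modes. -/
theorem flat_foldable_tile_two_modes
    (α β : ℝ) (hα : 0 < α) (hβ : 0 < β) (hαβ : α + β < π) (hne : α ≠ β)
    (p q : ℝ) (hp : p = cos ((α + β) / 2) / cos ((α - β) / 2))
    (hq : q = -sin ((α - β) / 2) / sin ((α + β) / 2))
    (x₁ x₂ x₃ x₄ : ℝ)
    (h₁ : x₁ ∈ ({-p, -1/q} : Set ℝ)) (h₂ : x₂ ∈ ({1/p, -q} : Set ℝ))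
    (h₃ : x₃ ∈ ({p, 1/q} : Set ℝ)) (h₄ : x₄ ∈ ({-1/p, q} : Set ℝ)) :
    x₁ * x₂ * x₃ * x₄ = 1 ↔
      (x₁, x₂, x₃, x₄) = (-p, 1/p, p, -1/p) ∨
        (x₁, x₂, x₃, x₄) = (-1/q, -q, 1/q, q) := by
  have hS : 0 < sin ((α + β) / 2) := sin_pos_of_pos_of_lt_pi (by linarith) (by linarith)
  have hcS : 0 < cos ((α + β) / 2) := cos_pos_of_mem_Ioo ⟨by linarith, by linarith⟩
  have hD : 0 < cos ((α - β) / 2) := cos_pos_of_mem_Ioo ⟨by linarith, by linarith⟩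
  have hsD : sin ((α - β) / 2) ≠ 0 := fun h =>
    hne (by linarith [(sin_eq_zero_iff_of_lt_of_lt (by linarith) (by linarith)).1 h])
  have hp₀ : p ≠ 0 := hp ▸ div_ne_zero hcS.ne' hD.ne'
  have hq₀ : q ≠ 0 := hq ▸ div_ne_zero (neg_ne_zero.2 hsD) hS.ne'
  have hpq := abs_lt.1 (hp ▸ hq ▸ abs_folding_multipliers_mul_lt_one hα hβ hαβ)
  exact tile_product_eq_one_iff hp₀ hq₀ hpq.2.ne hpq.1.ne' h₁ h₂ h₃ h₄
end
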